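/- arXiv:1708.03591 — 2 statements merged into one kernel-verified Lean document; each statement's English description precedes it below -/
import Mathlib

section
/- Let G be a weighted directed graph on vertex set {1,…,N} with Laplacian L, and suppose G has a rooted-out branch. Let g = (1,…,1)^T ∈ ℝ^N and let w ∈ ℝ^N satisfy w^T L = 0 and w^T g = 1. Then exp(−tL) converges to the rank-one matrix g w^T as t → ∞, and the convergence is exponential: there exist c > 0 and λ > 0 such that ‖exp(−tL) − g w^T‖ ≤ c e^{−λ t} for all t ≥ 0. -/
/-- The Laplacian of the weighted directed graph on `Fin N` with weights `a`. -/
def graphLaplacian {N : ℕ} (a : Fin N → Fin N → ℝ) : Matrix (Fin N) (Fin N) ℝ :=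
  Matrix.of fun i j => if i = j then ∑ k ∈ Finset.univ.erase i, a i k else -(a i j)

/-- `G` has a rooted-out branch: some vertex has a directed path to every other vertex
(information flows from `j` to `i` along an edge when `a i j > 0`). -/
def hasRootedOutBranch {N : ℕ} (a : Fin N → Fin N → ℝ) : Prop :=
  ∃ r : Fin N, ∀ v : Fin N, Relation.ReflTransGen (fun u v => 0 < a v u) r v

/-- The Euclidean norm on `ℝ^m`. -/
noncomputable def euclidEnorm {m : Type*} [Fintype m] (v : m → ℝ) : ℝ :=
  Real.sqrt (∑ i, v i ^ 2)

/-!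
Put `P = g wᵀ`. Since `L g = 0`, `wᵀ L = 0` and `wᵀ g = 1`, we have `L P = P L = 0` and `P² = P`,
hence `exp (-tL) - P = exp (-t(L + P)) (1 - P)`, and it suffices to show that `exp (-t(L + P))`
decays exponentially.

By Gershgorin, every eigenvalue of `L` is `0` or has positive real part. A maximum principle along
the rooted-out branch shows that `ker L` consists of the constant vectors, which makes `L + P`
invertible. An eigenvector of `L + P` is either not killed by `P`, and then its eigenvalue is `1`,
or it is killed by `P`, and then it is an eigenvector of `L` with a nonzero eigenvalue. So the
spectrum of `L + P` lies in the open right half-plane; as the eigenvalues of `exp (-(L + P))` are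
the `exp (-μ)` for eigenvalues `μ` of `L + P`, its spectral radius is less than `1`, and Gelfand's formula gives `‖exp (-m(L + P))‖ < 1` for some `m`. Since
`t ↦ ‖exp (-t(L + P))‖` is submultiplicative, this yields exponential decay.
-/

open Matrix Finset

section Laplacian

variable {N : ℕ} {a : Fin N → Fin N → ℝ}

theorem graphLaplacian_mulVec_apply (v : Fin N → ℝ) (i : Fin N) :
    (graphLaplacian a *ᵥ v) i = ∑ j ∈ univ.erase i, a i j * (v i - v j) := by
  rw [mulVec, dotProduct, ← add_sum_erase _ _ (mem_univ i)]
  have hoff : ∀ j ∈ univ.erase i, graphLaplacian a i j * v j = -(a i j * v j) := fun j hj => by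
    simp [graphLaplacian, (ne_of_mem_erase hj).symm]
  rw [sum_congr rfl hoff, sum_neg_distrib]
  simp only [graphLaplacian, of_apply, if_true, sum_mul, mul_sub, sum_sub_distrib]
  ring

theorem graphLaplacian_mulVec_const (c : ℝ) : graphLaplacian a *ᵥ (fun _ => c) = 0 := by
  ext i
  simp [graphLaplacian_mulVec_apply]

theorem graphLaplacian_mul_vecMulVec_const (c : ℝ) (w : Fin N → ℝ) :
    graphLaplacian a * vecMulVec (fun _ => c) w = 0 := by
  rw [mul_vecMulVec, graphLaplacian_mulVec_const, zero_vecMulVec]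

theorem eq_of_graphLaplacian_mulVec_eq_zero_of_isMax (ha : ∀ i j, 0 ≤ a i j)
    {v : Fin N → ℝ} (hv : graphLaplacian a *ᵥ v = 0) {b c : Fin N} (hc : ∀ j, v j ≤ v c)
    (hcb : 0 < a c b) : v b = v c := by
  have hterms : ∀ j ∈ univ.erase c, 0 ≤ a c j * (v c - v j) :=
    fun j _ => mul_nonneg (ha c j) (sub_nonneg.mpr (hc j))
  have hrow := graphLaplacian_mulVec_apply (a := a) v c
  rw [hv, Pi.zero_apply, eq_comm, sum_eq_zero_iff_of_nonneg hterms] at hrow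
  by_cases hbc : b = c
  · rw [hbc]
  · rcases mul_eq_zero.mp (hrow b (mem_erase.mpr ⟨hbc, mem_univ b⟩)) with h | h
    · exact absurd h hcb.ne'
    · linarith

theorem apply_le_apply_root_of_graphLaplacian_mulVec_eq_zero (ha : ∀ i j, 0 ≤ a i j) {r : Fin N}
    (hr : ∀ u, Relation.ReflTransGen (fun u v => 0 < a v u) r u)
    {v : Fin N → ℝ} (hv : graphLaplacian a *ᵥ v = 0) (k : Fin N) : v k ≤ v r := by
  have : Nonempty (Fin N) := ⟨r⟩
  obtain ⟨i, hi⟩ := Finite.exists_max v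
  -- maximality propagates backwards along the path from `r` to a maximiser
  suffices ∀ b, Relation.ReflTransGen (fun u v => 0 < a v u) r b →
      (∀ j, v j ≤ v b) → ∀ j, v j ≤ v r from this i (hr i) hi k
  intro b hrb
  induction hrb with
  | refl => exact id
  | tail _ hbc ih =>
    intro hc
    rw [← eq_of_graphLaplacian_mulVec_eq_zero_of_isMax ha hv hc hbc] at hc
    exact ih hc

theorem exists_eq_const_of_graphLaplacian_mulVec_eq_zero (ha : ∀ i j, 0 ≤ a i j)
    (hroot : hasRootedOutBranch a) {v : Fin N → ℝ} (hv : graphLaplacian a *ᵥ v = 0) :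
    ∃ c, v = fun _ => c := by
  obtain ⟨r, hr⟩ := hroot
  have hv' : graphLaplacian a *ᵥ (-v) = 0 := by rw [mulVec_neg, hv, neg_zero]
  refine ⟨v r, funext fun k => le_antisymm ?_ ?_⟩
  · exact apply_le_apply_root_of_graphLaplacian_mulVec_eq_zero ha hr hv k
  · simpa using apply_le_apply_root_of_graphLaplacian_mulVec_eq_zero ha hr hv' k

theorem eq_zero_or_re_pos_of_mem_closedBall {z : ℂ} {d : ℝ}
    (hz : z ∈ Metric.closedBall (d : ℂ) d) : z = 0 ∨ 0 < z.re := by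
  rw [or_iff_not_imp_right, not_lt]
  intro hre
  have hd : 0 ≤ d := Metric.nonempty_closedBall.mp ⟨z, hz⟩
  rw [Metric.mem_closedBall, Complex.dist_eq, ← sq_le_sq₀ (norm_nonneg _) hd,
    Complex.sq_norm, Complex.normSq_apply] at hz
  simp only [Complex.sub_re, Complex.ofReal_re, Complex.sub_im, Complex.ofReal_im] at hz
  have hre0 : z.re = 0 := by nlinarith [sq_nonneg z.im, mul_nonneg hd (neg_nonneg.mpr hre)]
  have him0 : z.im = 0 := by nlinarith [sq_nonneg z.im]
  exact Complex.ext hre0 him0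

theorem graphLaplacian_eigenvalue_eq_zero_or_re_pos (ha : ∀ i j, 0 ≤ a i j) {μ : ℂ}
    (hμ : Module.End.HasEigenvalue (toLin' ((graphLaplacian a).map Complex.ofReal)) μ) :
    μ = 0 ∨ 0 < μ.re := by
  obtain ⟨k, hk⟩ := eigenvalue_mem_ball hμ
  apply eq_zero_or_re_pos_of_mem_closedBall (d := ∑ j ∈ univ.erase k, a k j)
  convert hk using 2
  · simp [graphLaplacian]
  · refine sum_congr rfl fun j hj => ?_
    simp [graphLaplacian, (ne_of_mem_erase hj).symm, abs_of_nonneg (ha k j)]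

end Laplacian

section Consensus

variable {n : Type*} [Fintype n]

theorem vecMulVec_mul_eq_zero_of_vecMul_eq_zero {m R : Type*} [NonUnitalSemiring R] {g : m → R}
    {w : n → R} {M : Matrix n m R} (h : w ᵥ* M = 0) : vecMulVec g w * M = 0 := by
  rw [vecMulVec_mul, h, vecMulVec_zero]

theorem vecMulVec_one_mul_self_of_sum_eq_one {w : n → ℝ} (hw : ∑ i, w i = 1) :
    vecMulVec (fun _ => 1) w * vecMulVec (fun _ => 1) w = vecMulVec (fun _ : n => (1 : ℝ)) w := by
  rw [vecMulVec_mul_vecMulVec, show w ⬝ᵥ (fun _ => 1) = 1 by simp [dotProduct, hw], one_smul]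

variable [DecidableEq n]

theorem hasEigenvalue_toLin'_of_mulVec_eq_smul {K : Type*} [Field K] {A : Matrix n n K} {μ : K}
    {v : n → K} (hv : v ≠ 0) (h : A *ᵥ v = μ • v) : Module.End.HasEigenvalue (toLin' A) μ :=
  Module.End.hasEigenvalue_of_hasEigenvector
    ⟨Module.End.mem_eigenspace_iff.mpr (by rwa [toLin'_apply]), hv⟩

theorem re_pos_of_hasEigenvalue_add {L P : Matrix n n ℂ} (hPL : P * L = 0) (hPP : P * P = P)
    (hdet : (L + P).det ≠ 0)
    (hL : ∀ μ, Module.End.HasEigenvalue (toLin' L) μ → μ = 0 ∨ 0 < μ.re) {μ : ℂ}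
    (hμ : Module.End.HasEigenvalue (toLin' (L + P)) μ) : 0 < μ.re := by
  obtain ⟨v, hv⟩ := hμ.exists_hasEigenvector
  have hAv : (L + P) *ᵥ v = μ • v := by
    simpa only [toLin'_apply] using Module.End.mem_eigenspace_iff.mp hv.1
  have hPv : P *ᵥ v = μ • P *ᵥ v := by
    rw [← mulVec_smul, ← hAv, mulVec_mulVec, mul_add, hPL, hPP, zero_add]
  by_cases hμ1 : μ = 1
  · simp [hμ1]
  have hPv0 : P *ᵥ v = 0 := by
    have : (1 - μ) • P *ᵥ v = 0 := by rw [sub_smul, one_smul, ← hPv, sub_self]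
    exact (smul_eq_zero.mp this).resolve_left (sub_ne_zero.mpr (Ne.symm hμ1))
  have hLv : L *ᵥ v = μ • v := by rwa [add_mulVec, hPv0, add_zero] at hAv
  refine (hL μ (hasEigenvalue_toLin'_of_mulVec_eq_smul hv.2 hLv)).resolve_left fun hμ0 => hdet ?_
  exact exists_mulVec_eq_zero_iff.mp ⟨v, hv.2, by rw [hAv, hμ0, zero_smul]⟩

end Consensus

section GraphConsensus

variable {N : ℕ} {a : Fin N → Fin N → ℝ} {w : Fin N → ℝ}

theorem det_graphLaplacian_add_vecMulVec_ne_zero (ha : ∀ i j, 0 ≤ a i j)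
    (hroot : hasRootedOutBranch a) (hwL : w ᵥ* graphLaplacian a = 0) (hwg : ∑ i, w i = 1) :
    (graphLaplacian a + vecMulVec (fun _ => 1) w).det ≠ 0 := by
  set P := vecMulVec (fun _ : Fin N => (1 : ℝ)) w
  have hPA : P * (graphLaplacian a + P) = P := by
    rw [mul_add, vecMulVec_mul_eq_zero_of_vecMul_eq_zero hwL, zero_add,
      vecMulVec_one_mul_self_of_sum_eq_one hwg]
  intro hdet
  obtain ⟨x, hx0, hx⟩ := exists_mulVec_eq_zero_iff.mpr hdet
  have hPx : P *ᵥ x = 0 := by rw [← hPA, ← mulVec_mulVec, hx, mulVec_zero]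
  obtain ⟨c, rfl⟩ := exists_eq_const_of_graphLaplacian_mulVec_eq_zero ha hroot
    (by rwa [add_mulVec, hPx, add_zero] at hx)
  apply hx0
  rw [← hPx]
  ext i
  simp [P, vecMulVec_mulVec, dotProduct, ← sum_mul, hwg]

theorem re_pos_of_hasEigenvalue_graphLaplacian_add_vecMulVec (ha : ∀ i j, 0 ≤ a i j)
    (hroot : hasRootedOutBranch a) (hwL : w ᵥ* graphLaplacian a = 0) (hwg : ∑ i, w i = 1)
    {μ : ℂ} (hμ : Module.End.HasEigenvalue
      (toLin' ((graphLaplacian a + vecMulVec (fun _ => 1) w).map Complex.ofReal)) μ) :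
    0 < μ.re := by
  have hmul (M M' : Matrix (Fin N) (Fin N) ℝ) :
      M.map Complex.ofReal * M'.map Complex.ofReal = (M * M').map Complex.ofReal :=
    (Matrix.map_mul (f := Complex.ofRealHom)).symm
  rw [Matrix.map_add _ Complex.ofReal_add] at hμ
  refine re_pos_of_hasEigenvalue_add ?_ ?_ ?_
    (fun μ hμ => graphLaplacian_eigenvalue_eq_zero_or_re_pos ha hμ) hμ
  · rw [hmul, vecMulVec_mul_eq_zero_of_vecMul_eq_zero hwL, Matrix.map_zero _ Complex.ofReal_zero]
  · rw [hmul, vecMulVec_one_mul_self_of_sum_eq_one hwg]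
  · rw [← Matrix.map_add _ Complex.ofReal_add]
    intro hdet
    apply det_graphLaplacian_add_vecMulVec_ne_zero ha hroot hwL hwg
    exact Complex.ofReal_eq_zero.mp ((Complex.ofRealHom.map_det _).trans hdet)

end GraphConsensus

theorem exp_mul_eq_smul_of_mul_eq_smul {𝕂 𝔸 : Type*} [RCLike 𝕂] [NormedRing 𝔸]
    [NormedAlgebra 𝕂 𝔸] [CompleteSpace 𝔸] {x q : 𝔸} {μ : 𝕂} (h : x * q = μ • q) :
    NormedSpace.exp x * q = NormedSpace.exp μ • q := by
  have hpow (n : ℕ) : x ^ n * q = μ ^ n • q := by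
    induction n with
    | zero => simp
    | succ n ih => rw [pow_succ', mul_assoc, ih, mul_smul_comm, h, smul_smul, pow_succ]
  have hx := (NormedSpace.exp_series_hasSum_exp' (𝕂 := 𝕂) x).mul_right q
  have hμ := (NormedSpace.exp_series_hasSum_exp' (𝕂 := 𝕂) μ).smul_const q
  simp only [smul_mul_assoc, hpow, smul_smul] at hx
  exact hx.unique hμ

theorem exp_mul_eq_self_of_mul_eq_zero {𝔸 : Type*} [NormedRing 𝔸] [NormedAlgebra ℝ 𝔸]
    [CompleteSpace 𝔸] {x q : 𝔸} (h : x * q = 0) : NormedSpace.exp x * q = q := by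
  simpa using exp_mul_eq_smul_of_mul_eq_smul (𝕂 := ℝ) (x := x) (q := q) (μ := 0)
    (by rwa [zero_smul])

theorem exp_smul_sub_eq_exp_smul_add_mul_one_sub {𝔸 : Type*} [NormedRing 𝔸] [NormedAlgebra ℝ 𝔸]
    [NormedAlgebra ℚ 𝔸] [CompleteSpace 𝔸] {l p : 𝔸} (hlp : l * p = 0) (hpl : p * l = 0)
    (hpp : p * p = p) (s : ℝ) :
    NormedSpace.exp (s • l) - p = NormedSpace.exp (s • (l + p)) * (1 - p) := by
  have hcomm : Commute (s • l) (s • p) :=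
    ((show Commute l p from hlp.trans hpl.symm).smul_left s).smul_right s
  have hp : (s • p) * (1 - p) = 0 := by
    rw [smul_mul_assoc, mul_sub, mul_one, hpp, sub_self, smul_zero]
  rw [smul_add, NormedSpace.exp_add_of_commute hcomm, mul_assoc,
    exp_mul_eq_self_of_mul_eq_zero hp, mul_sub, mul_one,
    exp_mul_eq_self_of_mul_eq_zero (by rw [smul_mul_assoc, hlp, smul_zero])]

theorem exists_pow_norm_lt_one {A : Type*} [NormedRing A] [NormedAlgebra ℂ A] [CompleteSpace A]
    (a : A) (ha : ∀ z ∈ spectrum ℂ a, ‖z‖ < 1) : ∃ n, 0 < n ∧ ‖a ^ n‖ < 1 := by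
  rcases subsingleton_or_nontrivial A with hA | hA
  · exact ⟨1, one_pos, by simp [Subsingleton.elim (a ^ 1) 0]⟩
  have hρ : spectralRadius ℂ a < 1 := by
    simpa using spectrum.spectralRadius_lt_of_forall_lt a (r := 1) fun z hz => by
      simpa [← NNReal.coe_lt_coe] using ha z hz
  obtain ⟨m, hm⟩ := Filter.eventually_atTop.mp
    ((spectrum.pow_nnnorm_pow_one_div_tendsto_nhds_spectralRadius a).eventually_lt_const hρ)
  refine ⟨m + 1, m.succ_pos, ?_⟩
  by_contra! hle
  refine (hm (m + 1) m.le_succ).not_ge (ENNReal.one_le_rpow ?_ (by positivity))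
  exact_mod_cast hle

theorem exists_le_exp_neg_of_submultiplicative {f : ℝ → ℝ} {T M : ℝ} (hT : 0 < T)
    (hf : ∀ t, 0 ≤ f t) (hmul : ∀ s t, 0 ≤ s → 0 ≤ t → f (s + t) ≤ f s * f t)
    (hM : ∀ s ∈ Set.Icc 0 T, f s ≤ M) (hfT : f T < 1) :
    ∃ c, ∃ lam > 0, ∀ t, 0 ≤ t → f t ≤ c * Real.exp (-lam * t) := by
  set lam := (1 - f T) / T
  have hlam : 0 < lam := div_pos (by linarith) hT
  -- `lam` is chosen so that `f T = 1 - lam * T ≤ exp (-lam * T)`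
  have hfT' : f T ≤ Real.exp (-lam * T) := by
    rw [show -lam * T = -(1 - f T) by simp only [lam]; field_simp]
    linarith [Real.add_one_le_exp (-(1 - f T))]
  have hstep (k : ℕ) : ∀ s ∈ Set.Icc 0 T, f (s + k * T) ≤ M * Real.exp (-lam * (k * T)) := by
    intro s hs
    induction k with
    | zero => simpa using hM s hs
    | succ k ih =>
      calc f (s + (k + 1 : ℕ) * T) = f ((s + k * T) + T) := by push_cast; ring_nf
        _ ≤ f (s + k * T) * f T := hmul _ _ (by have := hs.1; positivity) hT.le
        _ ≤ M * Real.exp (-lam * (k * T)) * Real.exp (-lam * T) :=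
          mul_le_mul ih hfT' (hf T) ((hf _).trans ih)
        _ = M * Real.exp (-lam * ((k + 1 : ℕ) * T)) := by
          rw [mul_assoc, ← Real.exp_add]; push_cast; ring_nf
  refine ⟨M * Real.exp (lam * T), lam, hlam, fun t ht => ?_⟩
  have hM0 : 0 ≤ M := (hf 0).trans (hM 0 ⟨le_rfl, hT.le⟩)
  set k := ⌊t / T⌋₊
  have hkt : k * T ≤ t := (le_div_iff₀ hT).mp (Nat.floor_le (div_nonneg ht hT.le))
  have htk : t < (k + 1) * T := (div_lt_iff₀ hT).mp (Nat.lt_floor_add_one _)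
  calc f t = f ((t - k * T) + k * T) := by ring_nf
    _ ≤ M * Real.exp (-lam * (k * T)) := hstep k _ ⟨by linarith, by linarith⟩
    _ ≤ M * Real.exp (lam * T + -lam * t) := by gcongr; nlinarith
    _ = M * Real.exp (lam * T) * Real.exp (-lam * t) := by rw [Real.exp_add, mul_assoc]

theorem tendsto_of_norm_sub_le_exp_neg {E : Type*} [SeminormedAddCommGroup E] {f : ℝ → E} {y : E}
    {c lam : ℝ} (hlam : 0 < lam) (h : ∀ t, 0 ≤ t → ‖f t - y‖ ≤ c * Real.exp (-lam * t)) :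
    Filter.Tendsto f Filter.atTop (nhds y) := by
  have hexp : Filter.Tendsto (fun t => c * Real.exp (-lam * t)) Filter.atTop (nhds 0) := by
    simpa using (Real.tendsto_exp_neg_atTop_nhds_zero.comp
      (Filter.tendsto_id.const_mul_atTop hlam)).const_mul c
  refine tendsto_iff_norm_sub_tendsto_zero.mpr
    (squeeze_zero' (.of_forall fun _ => norm_nonneg _) ?_ hexp)
  filter_upwards [Filter.eventually_ge_atTop 0] using h

/- The Frobenius norm is submultiplicative, unchanged by `ℝ → ℂ`, and bounds the operator norm
for the Euclidean norm. -/
section FrobeniusNorm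

open scoped Matrix.Norms.Frobenius

theorem euclidEnorm_eq_norm_replicateCol {m : Type*} [Fintype m] (v : m → ℝ) :
    euclidEnorm v = ‖replicateCol (Fin 1) v‖ := by
  refine Eq.trans ?_ (frobenius_norm_replicateCol v).symm
  simp [euclidEnorm, EuclideanSpace.norm_eq]

theorem euclidEnorm_mulVec_le {m n : Type*} [Fintype m] [Fintype n] (M : Matrix m n ℝ)
    (x : n → ℝ) : euclidEnorm (M *ᵥ x) ≤ ‖M‖ * euclidEnorm x := by
  rw [euclidEnorm_eq_norm_replicateCol, euclidEnorm_eq_norm_replicateCol, replicateCol_mulVec]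
  exact frobenius_norm_mul _ _

variable {n : Type*} [Fintype n] [DecidableEq n]

theorem exp_mulVec_eq_smul_of_mulVec_eq_smul {𝕂 : Type*} [RCLike 𝕂] {A : Matrix n n 𝕂} {μ : 𝕂}
    {v : n → 𝕂} (h : A *ᵥ v = μ • v) : NormedSpace.exp A *ᵥ v = NormedSpace.exp μ • v := by
  cases isEmpty_or_nonempty n
  · exact Subsingleton.elim _ _
  have hcol := exp_mul_eq_smul_of_mul_eq_smul (x := A) (q := replicateCol n v)
    (by rw [← replicateCol_mulVec, h, replicateCol_smul])
  rw [← replicateCol_mulVec, ← replicateCol_smul] at hcol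
  exact replicateCol_injective hcol

theorem exists_mulVec_eq_smul_of_mem_spectrum_exp (A : Matrix n n ℂ) {z : ℂ}
    (hz : z ∈ spectrum ℂ (NormedSpace.exp A)) :
    ∃ μ : ℂ, ∃ v ≠ 0, A *ᵥ v = μ • v ∧ z = Complex.exp μ := by
  rw [← spectrum_toLin', ← Module.End.hasEigenvalue_iff_mem_spectrum] at hz
  -- `A` commutes with `exp A`, so it has an eigenvector inside the `z`-eigenspace of `exp A`
  have hcomm : Commute (toLin' (NormedSpace.exp A)) (toLin' A) := by
    simp only [Commute, SemiconjBy, Module.End.mul_eq_comp, ← toLin'_mul,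
      ((Commute.refl A).exp_left).eq]
  have hmaps := Module.End.mapsTo_genEigenspace_of_comm hcomm z 1
  have : Nontrivial (Module.End.eigenspace (toLin' (NormedSpace.exp A)) z) :=
    Submodule.nontrivial_iff_ne_bot.mpr hz
  obtain ⟨μ, hμ⟩ := Module.End.exists_eigenvalue ((toLin' A).restrict hmaps)
  obtain ⟨x, hx⟩ := hμ.exists_hasEigenvector
  have hv : (x : n → ℂ) ≠ 0 := fun h => hx.2 (Subtype.ext h)
  have hAv : A *ᵥ (x : n → ℂ) = μ • (x : n → ℂ) := congrArg Subtype.val hx.apply_eq_smul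
  have hzv : NormedSpace.exp A *ᵥ (x : n → ℂ) = z • (x : n → ℂ) := by
    simpa using Module.End.mem_eigenspace_iff.mp x.2
  refine ⟨μ, x, hv, hAv, smul_left_injective ℂ hv ?_⟩
  dsimp only
  rw [← hzv, exp_mulVec_eq_smul_of_mulVec_eq_smul hAv, Complex.exp_eq_exp_ℂ]

theorem exists_norm_exp_neg_smul_le {A : Matrix n n ℝ}
    (hA : ∀ μ, Module.End.HasEigenvalue (toLin' (A.map Complex.ofReal)) μ → 0 < μ.re) :
    ∃ c, ∃ lam > 0, ∀ t, 0 ≤ t → ‖NormedSpace.exp ((-t) • A)‖ ≤ c * Real.exp (-lam * t) := by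
  set B := NormedSpace.exp (-A.map Complex.ofReal)
  have hB : ∀ z ∈ spectrum ℂ B, ‖z‖ < 1 := by
    intro z hz
    obtain ⟨μ, v, hv, hAv, rfl⟩ := exists_mulVec_eq_smul_of_mem_spectrum_exp _ hz
    have hμ := hA (-μ) (hasEigenvalue_toLin'_of_mulVec_eq_smul hv
      (by rw [neg_smul, ← hAv, neg_mulVec, neg_neg]))
    rw [Complex.norm_exp, Real.exp_lt_one_iff]
    simpa using hμ
  obtain ⟨m, hm, hBm⟩ := exists_pow_norm_lt_one B hB
  have hBm' : ‖NormedSpace.exp ((-(m : ℝ)) • A)‖ = ‖B ^ m‖ := by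
    have hmap_cont : Continuous (Complex.ofRealHom.mapMatrix : Matrix n n ℝ →+* Matrix n n ℂ) :=
      continuous_id.matrix_map Complex.continuous_ofReal
    have hmap : Complex.ofRealHom.mapMatrix (NormedSpace.exp (-A)) = B :=
      (NormedSpace.map_exp _ hmap_cont (-A)).trans (congrArg _ (map_neg _ A))
    rw [neg_smul, ← smul_neg, Nat.cast_smul_eq_nsmul, Matrix.exp_nsmul, ← hmap, ← map_pow]
    exact (frobenius_norm_map_eq _ _ Complex.norm_real).symm
  have hcont : Continuous fun t : ℝ => NormedSpace.exp ((-t) • A) :=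
    NormedSpace.exp_continuous.comp (continuous_neg.smul continuous_const)
  obtain ⟨M, hM⟩ :=
    isCompact_Icc.exists_bound_of_continuousOn (hcont.continuousOn (s := Set.Icc 0 (m : ℝ)))
  refine exists_le_exp_neg_of_submultiplicative (f := fun t => ‖NormedSpace.exp ((-t) • A)‖)
    (by positivity) (fun _ => norm_nonneg _) (fun s t _ _ => ?_) hM (hBm'.trans_lt hBm)
  rw [neg_add, add_smul,
    Matrix.exp_add_of_commute _ _ (((Commute.refl A).smul_left _).smul_right _)]
  exact norm_mul_le _ _

theorem exists_norm_exp_neg_smul_graphLaplacian_sub_le {N : ℕ} {a : Fin N → Fin N → ℝ}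
    {w : Fin N → ℝ} (ha : ∀ i j, 0 ≤ a i j) (hroot : hasRootedOutBranch a)
    (hwL : w ᵥ* graphLaplacian a = 0) (hwg : ∑ i, w i = 1) :
    ∃ c, ∃ lam > 0, ∀ t, 0 ≤ t →
      ‖NormedSpace.exp ((-t) • graphLaplacian a) - vecMulVec (fun _ => 1) w‖
        ≤ c * Real.exp (-lam * t) := by
  obtain ⟨c, lam, hlam, hc⟩ := exists_norm_exp_neg_smul_le fun μ hμ =>
    re_pos_of_hasEigenvalue_graphLaplacian_add_vecMulVec ha hroot hwL hwg hμ
  set P := vecMulVec (fun _ : Fin N => (1 : ℝ)) w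
  refine ⟨c * ‖1 - P‖, lam, hlam, fun t ht => ?_⟩
  have hsplit : NormedSpace.exp ((-t) • graphLaplacian a) - P =
      NormedSpace.exp ((-t) • (graphLaplacian a + P)) * (1 - P) :=
    exp_smul_sub_eq_exp_smul_add_mul_one_sub (graphLaplacian_mul_vecMulVec_const 1 w)
      (vecMulVec_mul_eq_zero_of_vecMul_eq_zero hwL) (vecMulVec_one_mul_self_of_sum_eq_one hwg) _
  rw [hsplit]
  refine (norm_mul_le _ _).trans ?_
  rw [mul_right_comm]
  gcongr
  exact hc t ht

end FrobeniusNorm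

/-- if `G` has a rooted-out branch, `g = (1,…,1)ᵀ`, `wᵀL = 0` and `wᵀg = 1`,
then `exp(−tL) → g wᵀ` as `t → ∞`, exponentially fast in the operator norm induced by the
Euclidean norm. -/
theorem exp_neg_laplacian_tendsto_rank_one
    (N : ℕ) (a : Fin N → Fin N → ℝ) (ha : ∀ i j, 0 ≤ a i j)
    (L : Matrix (Fin N) (Fin N) ℝ) (hL : L = graphLaplacian a)
    (hroot : hasRootedOutBranch a)
    (w : Fin N → ℝ) (hwL : Matrix.vecMul w L = 0) (hwg : ∑ i, w i = 1) :
    Filter.Tendsto (fun t : ℝ => NormedSpace.exp ((-t) • L)) Filter.atTop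
        (nhds (Matrix.vecMulVec (fun _ => (1 : ℝ)) w)) ∧
    ∃ c > (0 : ℝ), ∃ lam > (0 : ℝ), ∀ t : ℝ, 0 ≤ t →
      ∀ x : Fin N → ℝ,
        euclidEnorm ((NormedSpace.exp ((-t) • L)
            - Matrix.vecMulVec (fun _ => (1 : ℝ)) w).mulVec x)
          ≤ c * Real.exp (-lam * t) * euclidEnorm x := by
  subst hL
  obtain ⟨c, lam, hlam, hc⟩ := exists_norm_exp_neg_smul_graphLaplacian_sub_le ha hroot hwL hwg
  open scoped Matrix.Norms.Frobenius in
  refine ⟨tendsto_of_norm_sub_le_exp_neg hlam hc, max c 1, by positivity, lam, hlam,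
    fun t ht x => (euclidEnorm_mulVec_le _ x).trans ?_⟩
  gcongr
  · exact Real.sqrt_nonneg _
  · exact (hc t ht).trans (by gcongr; exact le_max_left _ _)
end

section
/- Let G be a weighted directed graph on vertex set {1,…,N} with Laplacian L, and suppose G has a rooted-out branch. Then the matrix exponential semigroup is uniformly bounded: there exists η > 0 such that ‖exp(−tL)‖ ≤ η for all t ≥ 0. -/
/-- The Euclidean norm on `ℝ^m`. -/
noncomputable def enorm' {m : Type*} [Fintype m] (v : m → ℝ) : ℝ :=
  Real.sqrt (∑ i, v i ^ 2)

/-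
For `t ≥ 0` the matrix `M = -t • L` has nonnegative off-diagonal entries and zero row sums, so
`exp M` is row-stochastic: it is entrywise nonnegative because `exp M = e^{-c} exp (M + c • 1)`
with `M + c • 1 ≥ 0`, and `exp M *ᵥ 1 = 1` because `M *ᵥ 1 = 0` kills every term of the series
after the first. A row-stochastic `P` averages coordinates, so `|(P *ᵥ x) i| ≤ max_j |x j| ≤ ‖x‖`
and therefore `‖P *ᵥ x‖ ≤ √N ‖x‖`, uniformly in `t`.
-/

open NormedSpace Finset

namespace Matrix

variable {n : Type*} [Fintype n] [DecidableEq n]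

theorem hasSum_exp_series (M : Matrix n n ℝ) :
    HasSum (fun k : ℕ => (k.factorial⁻¹ : ℝ) • M ^ k) (exp M) := by
  -- `exp` only sees the topology, so any compatible Banach algebra norm computes it.
  let _ : NormedRing (Matrix n n ℝ) := Matrix.linftyOpNormedRing
  let _ : NormedAlgebra ℝ (Matrix n n ℝ) := Matrix.linftyOpNormedAlgebra
  exact exp_series_hasSum_exp' M

theorem exp_apply_nonneg {B : Matrix n n ℝ} (hB : ∀ i j, 0 ≤ B i j) (i j : n) :
    0 ≤ exp B i j :=
  (Pi.hasSum.1 (Pi.hasSum.1 (hasSum_exp_series B) i) j).nonneg fun k =>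
    mul_nonneg (by positivity) (pow_apply_nonneg hB k i j)

theorem exp_scalar (c : ℝ) : exp (scalar n c) = scalar n (Real.exp c) := by
  simp only [scalar_apply, exp_diagonal, Pi.exp_def, Real.exp_eq_exp_ℝ]

theorem exp_apply_nonneg_of_offDiag_nonneg {M : Matrix n n ℝ}
    (hM : ∀ i j, i ≠ j → 0 ≤ M i j) (i j : n) : 0 ≤ exp M i j := by
  -- A scalar shift makes `M` nonnegative, and the exponential of a scalar is a positive scalar.
  set c := ∑ k, |M k k|
  have hshift : ∀ i j, 0 ≤ (M + scalar n c) i j := by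
    intro i j
    rcases eq_or_ne i j with rfl | hij
    · have := single_le_sum (fun k _ => abs_nonneg (M k k)) (mem_univ i)
      simp only [add_apply, scalar_apply, diagonal_apply_eq]
      linarith [neg_abs_le (M i i)]
    · simpa [hij] using hM i j hij
  have hsplit : exp M = exp (M + scalar n c) * scalar n (Real.exp (-c)) := by
    rw [← exp_scalar, ← exp_add_of_commute _ _ (scalar_commute _ (Commute.all _) _).symm,
      map_neg, add_neg_cancel_right]
  rw [hsplit, scalar_apply (Real.exp (-c)), mul_diagonal]
  exact mul_nonneg (exp_apply_nonneg hshift i j) (Real.exp_pos _).le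

theorem exp_mulVec_eq_self {M : Matrix n n ℝ} {v : n → ℝ} (hv : M *ᵥ v = 0) :
    exp M *ᵥ v = v := by
  have hterm : ∀ k ≠ 0, ((k.factorial⁻¹ : ℝ) • M ^ k) *ᵥ v = 0 := by
    intro k hk
    obtain ⟨k, rfl⟩ := Nat.exists_eq_succ_of_ne_zero hk
    rw [smul_mulVec, pow_succ, ← mulVec_mulVec, hv, mulVec_zero, smul_zero]
  have hsum : HasSum (fun k : ℕ => ((k.factorial⁻¹ : ℝ) • M ^ k) *ᵥ v) (exp M *ᵥ v) :=
    (hasSum_exp_series M).map (mulVec.addMonoidHomLeft v)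
      (continuous_id.matrix_mulVec continuous_const)
  simpa using hsum.unique (hasSum_single 0 hterm)

theorem exp_mem_rowStochastic {M : Matrix n n ℝ} (hM : ∀ i j, i ≠ j → 0 ≤ M i j)
    (hM₁ : M *ᵥ 1 = 0) : exp M ∈ rowStochastic ℝ n :=
  mem_rowStochastic.2 ⟨exp_apply_nonneg_of_offDiag_nonneg hM, exp_mulVec_eq_self hM₁⟩

end Matrix

open Matrix

theorem graphLaplacian_apply_of_ne {N : ℕ} (a : Fin N → Fin N → ℝ) {i j : Fin N} (h : i ≠ j) :
    graphLaplacian a i j = -a i j := by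
  simp [graphLaplacian, h]

theorem graphLaplacian_mulVec_one {N : ℕ} (a : Fin N → Fin N → ℝ) :
    graphLaplacian a *ᵥ 1 = 0 := by
  ext i
  rw [mulVec, dotProduct, ← add_sum_erase _ _ (mem_univ i),
    sum_congr rfl fun j hj => by rw [graphLaplacian_apply_of_ne a (ne_of_mem_erase hj).symm]]
  simp [graphLaplacian]

theorem exp_neg_smul_graphLaplacian_mem_rowStochastic {N : ℕ} {a : Fin N → Fin N → ℝ}
    (ha : ∀ i j, 0 ≤ a i j) {t : ℝ} (ht : 0 ≤ t) :
    exp ((-t) • graphLaplacian a) ∈ rowStochastic ℝ (Fin N) := by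
  refine exp_mem_rowStochastic (fun i j hij => ?_) ?_
  · rw [Matrix.smul_apply, graphLaplacian_apply_of_ne a hij, smul_eq_mul, neg_mul_neg]
    exact mul_nonneg ht (ha i j)
  · rw [smul_mulVec, graphLaplacian_mulVec_one, smul_zero]

section EuclideanNorm

variable {m : Type*} [Fintype m]

theorem abs_le_enorm' (v : m → ℝ) (i : m) : |v i| ≤ enorm' v := by
  rw [← Real.sqrt_sq_eq_abs]
  exact Real.sqrt_le_sqrt (single_le_sum (fun k _ => sq_nonneg (v k)) (mem_univ i))

theorem enorm'_le_of_forall_abs_le {v : m → ℝ} {C : ℝ} (hC : 0 ≤ C) (hv : ∀ i, |v i| ≤ C) :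
    enorm' v ≤ √(Fintype.card m) * C := by
  calc enorm' v ≤ √(∑ _i : m, C ^ 2) :=
        Real.sqrt_le_sqrt <| sum_le_sum fun i _ =>
          sq_abs (v i) ▸ pow_le_pow_left₀ (abs_nonneg _) (hv i) 2
    _ = √(Fintype.card m) * C := by
        rw [sum_const, card_univ, nsmul_eq_mul, Real.sqrt_mul (Nat.cast_nonneg _), Real.sqrt_sq hC]

theorem abs_mulVec_le_of_mem_rowStochastic [DecidableEq m] {P : Matrix m m ℝ}
    (hP : P ∈ rowStochastic ℝ m) {x : m → ℝ} {C : ℝ} (hx : ∀ j, |x j| ≤ C) (i : m) :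
    |(P *ᵥ x) i| ≤ C :=
  calc |∑ j, P i j * x j| ≤ ∑ j, P i j * C := by
        refine (abs_sum_le_sum_abs _ _).trans (sum_le_sum fun j _ => ?_)
        rw [abs_mul, abs_of_nonneg (nonneg_of_mem_rowStochastic hP)]
        exact mul_le_mul_of_nonneg_left (hx j) (nonneg_of_mem_rowStochastic hP)
    _ = C := by rw [← sum_mul, sum_row_of_mem_rowStochastic hP, one_mul]

theorem enorm'_mulVec_le_of_mem_rowStochastic [DecidableEq m] {P : Matrix m m ℝ}
    (hP : P ∈ rowStochastic ℝ m) (x : m → ℝ) :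
    enorm' (P *ᵥ x) ≤ √(Fintype.card m) * enorm' x :=
  enorm'_le_of_forall_abs_le (Real.sqrt_nonneg _)
    (abs_mulVec_le_of_mem_rowStochastic hP (abs_le_enorm' x))

end EuclideanNorm

theorem exp_neg_laplacian_uniformly_bounded_general
    (N : ℕ) (a : Fin N → Fin N → ℝ) (ha : ∀ i j, 0 ≤ a i j)
    (L : Matrix (Fin N) (Fin N) ℝ) (hL : L = graphLaplacian a) :
    ∃ η > (0 : ℝ), ∀ t : ℝ, 0 ≤ t → ∀ x : Fin N → ℝ,
      enorm' ((NormedSpace.exp ((-t) • L)).mulVec x) ≤ η * enorm' x := by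
  refine ⟨√N + 1, by positivity, fun t ht x => ?_⟩
  subst hL
  calc enorm' (exp ((-t) • graphLaplacian a) *ᵥ x) ≤ √N * enorm' x := by
        simpa using enorm'_mulVec_le_of_mem_rowStochastic
          (exp_neg_smul_graphLaplacian_mem_rowStochastic ha ht) x
    _ ≤ (√N + 1) * enorm' x :=
        mul_le_mul_of_nonneg_right (le_add_of_nonneg_right zero_le_one) (Real.sqrt_nonneg _)

/-- if `G` has a rooted-out branch, the semigroup `exp(−tL)` is uniformly
bounded in the operator norm induced by the Euclidean norm: there exists `η > 0` with
`‖exp(−tL)‖ ≤ η` for all `t ≥ 0`. -/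
theorem exp_neg_laplacian_uniformly_bounded
    (N : ℕ) (a : Fin N → Fin N → ℝ) (ha : ∀ i j, 0 ≤ a i j)
    (L : Matrix (Fin N) (Fin N) ℝ) (hL : L = graphLaplacian a)
    (hroot : hasRootedOutBranch a) :
    ∃ η > (0 : ℝ), ∀ t : ℝ, 0 ≤ t → ∀ x : Fin N → ℝ,
      enorm' ((NormedSpace.exp ((-t) • L)).mulVec x) ≤ η * enorm' x :=
  exp_neg_laplacian_uniformly_bounded_general N a ha L hL
end
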